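/- arXiv:2502.01888 — 6 statements merged into one kernel-verified Lean document; each statement's English description precedes it below -/
import Mathlib

section
/- Let B be a symmetric n×n real matrix and Q an n×d matrix with orthonormal columns. For any d×d matrix X, ‖B − Q ⟦X⟧_k Qᵀ‖_F ≤ ‖B − Q ⟦Qᵀ B Q⟧_k Qᵀ‖_F + 2‖Qᵀ B Q − X‖_F, where ⟦·⟧_k denotes a best rank-k approximation in Frobenius norm. -/
open Matrix BigOperators

/-- Frobenius norm of a real matrix. -/
noncomputable def frobNorm {m n : Type*} [Fintype m] [Fintype n] (M : Matrix m n ℝ) : ℝ :=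
  Real.sqrt (∑ i, ∑ j, (M i j) ^ 2)

section Aux

attribute [local instance] Matrix.frobeniusSeminormedAddCommGroup

lemma frobNorm_eq_norm {m n : Type*} [Fintype m] [Fintype n] (M : Matrix m n ℝ) :
    frobNorm M = ‖M‖ := by
  rw [frobNorm, Matrix.frobenius_norm_def, ← Real.sqrt_eq_rpow]
  congr 1
  refine Finset.sum_congr rfl fun i _ => Finset.sum_congr rfl fun j _ => ?_
  rw [show ((2:ℝ) = ((2:ℕ):ℝ)) by norm_num, Real.rpow_natCast]
  simp [Real.norm_eq_abs, sq_abs]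

lemma frobNorm_sub_le {m n : Type*} [Fintype m] [Fintype n] (A B C : Matrix m n ℝ) :
    frobNorm (A - C) ≤ frobNorm (A - B) + frobNorm (B - C) := by
  simp only [frobNorm_eq_norm]
  exact norm_sub_le_norm_sub_add_norm_sub A B C

end Aux

lemma frobNorm_eq_sqrt_trace {m n : Type*} [Fintype m] [Fintype n] [DecidableEq n]
    (M : Matrix m n ℝ) : frobNorm M = Real.sqrt (Mᵀ * M).trace := by
  rw [frobNorm]
  congr 1
  rw [Matrix.trace, Finset.sum_comm]
  simp [Matrix.mul_apply, Matrix.diag, sq]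

lemma trace_transpose_mul_self_nonneg {m n : Type*} [Fintype m] [Fintype n] [DecidableEq n]
    (M : Matrix m n ℝ) : 0 ≤ (Mᵀ * M).trace := by
  rw [Matrix.trace]
  refine Finset.sum_nonneg fun j _ => ?_
  simp only [Matrix.diag, Matrix.mul_apply, Matrix.transpose_apply]
  exact Finset.sum_nonneg fun i _ => mul_self_nonneg _

lemma key_decomp {n d : ℕ} (B : Matrix (Fin n) (Fin n) ℝ)
    (Q : Matrix (Fin n) (Fin d) ℝ) (hQ : Qᵀ * Q = 1)
    (M : Matrix (Fin d) (Fin d) ℝ) :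
    ((B - Q * M * Qᵀ)ᵀ * (B - Q * M * Qᵀ)).trace
      = ((B - Q * (Qᵀ * B * Q) * Qᵀ)ᵀ * (B - Q * (Qᵀ * B * Q) * Qᵀ)).trace
        + ((Qᵀ * B * Q - M)ᵀ * (Qᵀ * B * Q - M)).trace := by
  have cyc : ∀ (U : Matrix (Fin n) (Fin d) ℝ) (V : Matrix (Fin d) (Fin n) ℝ),
      (U * V).trace = (V * U).trace := fun U V => Matrix.trace_mul_comm U V
  have h1 : ∀ N : Matrix (Fin d) (Fin d) ℝ,
      (Bᵀ * (Q * N * Qᵀ)).trace = ((Qᵀ * B * Q)ᵀ * N).trace := by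
    intro N
    calc (Bᵀ * (Q * N * Qᵀ)).trace = (Qᵀ * (Bᵀ * (Q * N))).trace := by
          rw [← Matrix.mul_assoc, Matrix.trace_mul_comm]
      _ = ((Qᵀ * B * Q)ᵀ * N).trace := by
          simp [Matrix.transpose_mul, Matrix.mul_assoc]
  have h2 : ∀ N : Matrix (Fin d) (Fin d) ℝ,
      ((Q * N * Qᵀ)ᵀ * B).trace = (Nᵀ * (Qᵀ * B * Q)).trace := by
    intro N
    calc ((Q * N * Qᵀ)ᵀ * B).trace = (Q * (Nᵀ * (Qᵀ * B))).trace := by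
          simp [Matrix.transpose_mul, Matrix.mul_assoc]
      _ = ((Nᵀ * (Qᵀ * B)) * Q).trace := Matrix.trace_mul_comm _ _
      _ = (Nᵀ * (Qᵀ * B * Q)).trace := by simp [Matrix.mul_assoc]
  have h3 : ∀ N : Matrix (Fin d) (Fin d) ℝ,
      ((Q * N * Qᵀ)ᵀ * (Q * N * Qᵀ)).trace = (Nᵀ * N).trace := by
    intro N
    have e1 : (Q * N * Qᵀ)ᵀ * (Q * N * Qᵀ) = Q * (Nᵀ * N) * Qᵀ := by
      rw [show (Q * N * Qᵀ)ᵀ * (Q * N * Qᵀ) = Q * Nᵀ * (Qᵀ * Q) * (N * Qᵀ) from by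
        simp [Matrix.transpose_mul, Matrix.mul_assoc], hQ]
      simp [Matrix.mul_assoc]
    rw [e1, Matrix.trace_mul_comm, ← Matrix.mul_assoc, hQ, Matrix.one_mul]
  have expand : ∀ N : Matrix (Fin d) (Fin d) ℝ,
      ((B - Q * N * Qᵀ)ᵀ * (B - Q * N * Qᵀ)).trace
        = (Bᵀ * B).trace - ((Qᵀ * B * Q)ᵀ * N).trace - (Nᵀ * (Qᵀ * B * Q)).trace
          + (Nᵀ * N).trace := by
    intro N
    rw [Matrix.transpose_sub, Matrix.sub_mul, Matrix.mul_sub, Matrix.mul_sub,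
      Matrix.trace_sub, Matrix.trace_sub, Matrix.trace_sub, h1 N, h2 N, h3 N]
    ring
  have expandA : ∀ N : Matrix (Fin d) (Fin d) ℝ,
      (((Qᵀ * B * Q) - N)ᵀ * ((Qᵀ * B * Q) - N)).trace
        = ((Qᵀ * B * Q)ᵀ * (Qᵀ * B * Q)).trace - ((Qᵀ * B * Q)ᵀ * N).trace
          - (Nᵀ * (Qᵀ * B * Q)).trace + (Nᵀ * N).trace := by
    intro N
    rw [Matrix.transpose_sub, Matrix.sub_mul, Matrix.mul_sub, Matrix.mul_sub,
      Matrix.trace_sub, Matrix.trace_sub, Matrix.trace_sub]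
    ring
  rw [expand M, expand (Qᵀ * B * Q), expandA M]
  ring

/-- Robustness of the rank-k truncated projection error: `Xk` is a best rank-k
approximation of `X`, `Bk` is a best rank-k approximation of `Qᵀ B Q`. -/
theorem stmt1 {n d k : ℕ} (B : Matrix (Fin n) (Fin n) ℝ) (hB : B.IsSymm)
    (Q : Matrix (Fin n) (Fin d) ℝ) (hQ : Qᵀ * Q = 1)
    (X Xk Bk : Matrix (Fin d) (Fin d) ℝ)
    (hXk_rank : Xk.rank ≤ k)
    (hXk_best : ∀ N : Matrix (Fin d) (Fin d) ℝ, N.rank ≤ k →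
      frobNorm (X - Xk) ≤ frobNorm (X - N))
    (hBk_rank : Bk.rank ≤ k)
    (hBk_best : ∀ N : Matrix (Fin d) (Fin d) ℝ, N.rank ≤ k →
      frobNorm (Qᵀ * B * Q - Bk) ≤ frobNorm (Qᵀ * B * Q - N)) :
    frobNorm (B - Q * Xk * Qᵀ)
      ≤ frobNorm (B - Q * Bk * Qᵀ) + 2 * frobNorm (Qᵀ * B * Q - X) := by
  set A := Qᵀ * B * Q with hA
  set c2 := ((B - Q * A * Qᵀ)ᵀ * (B - Q * A * Qᵀ)).trace with hc2
  have hc2nn : 0 ≤ c2 := trace_transpose_mul_self_nonneg _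
  -- frobNorm squares
  have sq_of : ∀ M : Matrix (Fin d) (Fin d) ℝ, ((A - M)ᵀ * (A - M)).trace
      = (frobNorm (A - M)) ^ 2 := by
    intro M
    rw [frobNorm_eq_sqrt_trace, Real.sq_sqrt (trace_transpose_mul_self_nonneg _)]
  have hXkeq : frobNorm (B - Q * Xk * Qᵀ) = Real.sqrt (c2 + (frobNorm (A - Xk)) ^ 2) := by
    rw [frobNorm_eq_sqrt_trace, key_decomp B Q hQ Xk, ← hA, ← hc2, sq_of]
  have hBkeq : frobNorm (B - Q * Bk * Qᵀ) = Real.sqrt (c2 + (frobNorm (A - Bk)) ^ 2) := by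
    rw [frobNorm_eq_sqrt_trace, key_decomp B Q hQ Bk, ← hA, ← hc2, sq_of]
  set s := frobNorm (A - Xk) with hs
  set a := frobNorm (A - Bk) with ha
  set t := frobNorm (A - X) with ht
  have hsnn : 0 ≤ s := Real.sqrt_nonneg _
  have hann : 0 ≤ a := Real.sqrt_nonneg _
  have htnn : 0 ≤ t := Real.sqrt_nonneg _
  have hstep : s ≤ a + 2 * t := by
    have h1 : s ≤ t + frobNorm (X - Xk) := frobNorm_sub_le A X Xk
    have h2 : frobNorm (X - Xk) ≤ frobNorm (X - Bk) := hXk_best Bk hBk_rank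
    have h3 : frobNorm (X - Bk) ≤ frobNorm (X - A) + a := frobNorm_sub_le X A Bk
    have h4 : frobNorm (X - A) = t := by
      rw [ht, frobNorm, frobNorm]
      congr 1
      refine Finset.sum_congr rfl fun i _ => Finset.sum_congr rfl fun j _ => ?_
      simp [Matrix.sub_apply]
      ring
    linarith
  rw [hXkeq, hBkeq]
  have hY : (Real.sqrt (c2 + a ^ 2)) ^ 2 = c2 + a ^ 2 :=
    Real.sq_sqrt (by positivity)
  have hYnn : 0 ≤ Real.sqrt (c2 + a ^ 2) := Real.sqrt_nonneg _
  have hYa : a ≤ Real.sqrt (c2 + a ^ 2) := by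
    have h := Real.sqrt_le_sqrt (show a ^ 2 ≤ c2 + a ^ 2 by linarith)
    rwa [Real.sqrt_sq hann] at h
  have hX2 : (Real.sqrt (c2 + s ^ 2)) ^ 2 = c2 + s ^ 2 :=
    Real.sq_sqrt (by positivity)
  have h1 : Real.sqrt (c2 + s ^ 2) ≤ Real.sqrt (c2 + (a + 2 * t) ^ 2) :=
    Real.sqrt_le_sqrt (by nlinarith)
  have h2 : Real.sqrt (c2 + (a + 2 * t) ^ 2) ≤ Real.sqrt (c2 + a ^ 2) + 2 * t := by
    rw [show Real.sqrt (c2 + a ^ 2) + 2 * t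
        = Real.sqrt ((Real.sqrt (c2 + a ^ 2) + 2 * t) ^ 2) from
      (Real.sqrt_sq (by positivity)).symm]
    apply Real.sqrt_le_sqrt
    nlinarith [hYa, hY]
  linarith
end

section
/- Let B be a symmetric n×n matrix and let Q₁ ∈ ℝ^{n×d₁}, Q₂ ∈ ℝ^{n×d₂} both have orthonormal columns with range(Q₂) ⊆ range(Q₁). Then ‖B − Q₁ Q₁ᵀ B Q₁ Q₁ᵀ‖_F ≤ ‖B − Q₂ Q₂ᵀ B Q₂ Q₂ᵀ‖_F. -/
open Matrix BigOperators

lemma frob_pythag {m n : Type*} [Fintype m] [Fintype n] (X Y : Matrix m n ℝ)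
    (h : ∑ i, ∑ j, X i j * Y i j = 0) : frobNorm X ≤ frobNorm (X + Y) := by
  unfold frobNorm
  apply Real.sqrt_le_sqrt
  have hpt : ∀ i j, ((X + Y) i j) ^ 2 = (X i j) ^ 2 + (2 * (X i j * Y i j) + (Y i j) ^ 2) := by
    intro i j; simp [Matrix.add_apply]; ring
  simp only [hpt, Finset.sum_add_distrib]
  have h2 : ∑ i : m, ∑ j : n, 2 * (X i j * Y i j) = 0 := by
    simp only [← Finset.mul_sum, h, mul_zero]
  have hY : 0 ≤ ∑ i : m, ∑ j : n, (Y i j) ^ 2 :=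
    Finset.sum_nonneg fun i _ => Finset.sum_nonneg fun j _ => sq_nonneg _
  linarith

lemma inner_eq_trace {m n : Type*} [Fintype m] [Fintype n] (X Y : Matrix m n ℝ) :
    ∑ i, ∑ j, X i j * Y i j = Matrix.trace (Xᵀ * Y) := by
  rw [Finset.sum_comm]
  simp [Matrix.trace, Matrix.mul_apply, Matrix.diag]

/-- Compressing onto a larger subspace gives a smaller two-sided projection error. -/
theorem stmt3 {n d1 d2 : ℕ} (B : Matrix (Fin n) (Fin n) ℝ) (hB : B.IsSymm)
    (Q1 : Matrix (Fin n) (Fin d1) ℝ) (hQ1 : Q1ᵀ * Q1 = 1)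
    (Q2 : Matrix (Fin n) (Fin d2) ℝ) (hQ2 : Q2ᵀ * Q2 = 1)
    (hrange : ∃ C : Matrix (Fin d1) (Fin d2) ℝ, Q2 = Q1 * C) :
    frobNorm (B - Q1 * (Q1ᵀ * B * Q1) * Q1ᵀ)
      ≤ frobNorm (B - Q2 * (Q2ᵀ * B * Q2) * Q2ᵀ) := by
  obtain ⟨C, hC⟩ := hrange
  set P1 : Matrix (Fin n) (Fin n) ℝ := Q1 * Q1ᵀ with hP1def
  set P2 : Matrix (Fin n) (Fin n) ℝ := Q2 * Q2ᵀ with hP2def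
  have hP1sym : P1ᵀ = P1 := by simp [hP1def, Matrix.transpose_mul]
  have hP1idem : P1 * P1 = P1 := by
    rw [hP1def]
    calc Q1 * Q1ᵀ * (Q1 * Q1ᵀ) = Q1 * (Q1ᵀ * Q1) * Q1ᵀ := by
          simp only [Matrix.mul_assoc]
      _ = Q1 * Q1ᵀ := by rw [hQ1, Matrix.mul_one]
  have hP1Q2 : P1 * Q2 = Q2 := by
    rw [hP1def, hC, ← Matrix.mul_assoc, Matrix.mul_assoc Q1 Q1ᵀ Q1, hQ1, Matrix.mul_one]
  have hQ2P1 : Q2ᵀ * P1 = Q2ᵀ := by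
    have := congrArg Matrix.transpose hP1Q2
    simpa [Matrix.transpose_mul, hP1sym] using this
  have hP12 : P1 * P2 = P2 := by
    rw [hP2def, ← Matrix.mul_assoc, hP1Q2]
  have hP21 : P2 * P1 = P2 := by
    rw [hP2def, Matrix.mul_assoc, hQ2P1]
  set X : Matrix (Fin n) (Fin n) ℝ := B - P1 * B * P1 with hXdef
  set Y : Matrix (Fin n) (Fin n) ℝ := P1 * B * P1 - P2 * B * P2 with hYdef
  have hPXP : P1 * X * P1 = 0 := by
    rw [hXdef]
    simp only [Matrix.mul_sub, Matrix.sub_mul]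
    have : P1 * (P1 * B * P1) * P1 = P1 * B * P1 := by
      calc P1 * (P1 * B * P1) * P1 = (P1 * P1) * B * (P1 * P1) := by
            simp only [Matrix.mul_assoc]
        _ = P1 * B * P1 := by rw [hP1idem]
    rw [this, sub_self]
  have hPYP : P1 * Y * P1 = Y := by
    rw [hYdef]
    simp only [Matrix.mul_sub, Matrix.sub_mul]
    have h1 : P1 * (P1 * B * P1) * P1 = P1 * B * P1 := by
      calc P1 * (P1 * B * P1) * P1 = (P1 * P1) * B * (P1 * P1) := by
            simp only [Matrix.mul_assoc]
        _ = P1 * B * P1 := by rw [hP1idem]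
    have h2 : P1 * (P2 * B * P2) * P1 = P2 * B * P2 := by
      calc P1 * (P2 * B * P2) * P1 = (P1 * P2) * B * (P2 * P1) := by
            simp only [Matrix.mul_assoc]
        _ = P2 * B * P2 := by rw [hP12, hP21]
    rw [h1, h2]
  have hinner : ∑ i, ∑ j, X i j * Y i j = 0 := by
    rw [inner_eq_trace]
    have h0 : P1 * Xᵀ * P1 = 0 := by
      have := congrArg Matrix.transpose hPXP
      simpa [Matrix.transpose_mul, hP1sym, Matrix.mul_assoc] using this
    calc Matrix.trace (Xᵀ * Y) = Matrix.trace (Xᵀ * (P1 * Y * P1)) := by rw [hPYP]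
      _ = Matrix.trace ((Xᵀ * (P1 * Y)) * P1) := by simp only [Matrix.mul_assoc]
      _ = Matrix.trace (P1 * (Xᵀ * (P1 * Y))) := Matrix.trace_mul_comm _ _
      _ = Matrix.trace ((P1 * Xᵀ * P1) * Y) := by simp only [Matrix.mul_assoc]
      _ = 0 := by rw [h0]; simp
  have key := frob_pythag X Y hinner
  have hXY : X + Y = B - P2 * B * P2 := by
    rw [hXdef, hYdef]; abel
  have e1 : B - Q1 * (Q1ᵀ * B * Q1) * Q1ᵀ = X := by
    rw [hXdef, hP1def]; simp only [Matrix.mul_assoc]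
  have e2 : B - Q2 * (Q2ᵀ * B * Q2) * Q2ᵀ = X + Y := by
    rw [hXY, hP2def]; simp only [Matrix.mul_assoc]
  rw [e1, e2]
  exact key
end

section
/- For any symmetric positive semidefinite block matrix P with blocks P = [[P₁₁, P₁₂],[P₂₁, P₂₂]] that is an orthogonal projection onto the range of [I; F]ᵀ (i.e., the column span of the matrix with top block I_k and bottom block F), the complement I − P satisfies: I − P ⪯ [[Fᵀ F, −(I+FᵀF)^{−1}Fᵀ],[−F(I+FᵀF)^{−1}, I]] in the Loewner order. -/
/-!
The difference collapses to the block-diagonal matrix `diag(FᵀF - I + G, F G Fᵀ)` with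
`G = (I + FᵀF)⁻¹`. The second block is a congruence of `G ⪰ 0`; so is the first, because writing
`FᵀF = S - I` with `S = I + FᵀF` gives `FᵀF - I + S⁻¹ = (S - I) S⁻¹ (S - I) = FᵀF · G · FᵀF`.
-/

open Matrix

namespace Matrix

variable {m n R : Type*} [Fintype m] [Fintype n]

theorem PosSemidef.fromBlocks_zero_zero [CommRing R] [PartialOrder R] [StarRing R]
    [StarOrderedRing R] {A : Matrix m m R} {D : Matrix n n R}
    (hA : A.PosSemidef) (hD : D.PosSemidef) :
    (fromBlocks A 0 0 D).PosSemidef := by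
  rw [posSemidef_iff_dotProduct_mulVec]
  refine ⟨by simp [IsHermitian, fromBlocks_conjTranspose, hA.1.eq, hD.1.eq], fun x ↦ ?_⟩
  rw [fromBlocks_mulVec, dotProduct_block]
  simp only [zero_mulVec, add_zero, zero_add, Sum.elim_comp_inl, Sum.elim_comp_inr]
  exact add_nonneg (hA.dotProduct_mulVec_nonneg (x ∘ Sum.inl))
    (hD.dotProduct_mulVec_nonneg (x ∘ Sum.inr))

theorem sub_one_add_inv_one_add [DecidableEq n] [CommRing R] (A : Matrix n n R)
    (h : IsUnit (1 + A).det) : A - 1 + (1 + A)⁻¹ = A * (1 + A)⁻¹ * A := by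
  set S := 1 + A with hS
  have hA : A = S - 1 := by rw [hS]; abel
  rw [hA]
  simp only [sub_mul, mul_sub, mul_nonsing_inv _ h, nonsing_inv_mul _ h, one_mul, mul_one]
  abel

open scoped ComplexOrder in
theorem PosSemidef.sub_one_add_inv_one_add {𝕜 : Type*} [RCLike 𝕜] [DecidableEq n]
    {A : Matrix n n 𝕜} (hA : A.PosSemidef) : (A - 1 + (1 + A)⁻¹).PosSemidef := by
  have hS := PosDef.one.add_posSemidef hA
  rw [Matrix.sub_one_add_inv_one_add A ((isUnit_iff_isUnit_det _).mp hS.isUnit)]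
  simpa only [hA.1.eq] using hS.posSemidef.inv.conjTranspose_mul_mul_same A

end Matrix

/-- Loewner bound for the complement of the orthogonal projector onto `range([I; F])`:
`I − P ⪯ [[FᵀF, −(I+FᵀF)⁻¹Fᵀ], [−F(I+FᵀF)⁻¹, I]]`. -/
theorem stmt7 {k m : ℕ} (F : Matrix (Fin m) (Fin k) ℝ) :
    let G : Matrix (Fin k) (Fin k) ℝ := (1 + Fᵀ * F)⁻¹
    let P : Matrix (Fin k ⊕ Fin m) (Fin k ⊕ Fin m) ℝ :=
      Matrix.fromBlocks G (G * Fᵀ) (F * G) (F * G * Fᵀ)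
    (Matrix.fromBlocks (Fᵀ * F) (-(G * Fᵀ)) (-(F * G)) 1 - (1 - P)).PosSemidef := by
  intro G P
  have hFF : (Fᵀ * F).PosSemidef := by simpa using posSemidef_conjTranspose_mul_self F
  have hG : G.PosSemidef := (PosDef.one.add_posSemidef hFF).posSemidef.inv
  have hdiag : fromBlocks (Fᵀ * F) (-(G * Fᵀ)) (-(F * G)) 1 - (1 - P) =
      fromBlocks (Fᵀ * F - 1 + G) 0 0 (F * G * Fᵀ) := by
    simp only [P, ← fromBlocks_one, sub_eq_add_neg, fromBlocks_neg, fromBlocks_add, fromBlocks_inj]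
    refine ⟨by abel, by abel, by abel, by abel⟩
  rw [hdiag]
  have hFGF : (F * G * Fᵀ).PosSemidef := by simpa using hG.mul_mul_conjTranspose_same F
  exact hFF.sub_one_add_inv_one_add.fromBlocks_zero_zero hFGF
end

section
/- Let A be symmetric with eigendecomposition A = U Λ Uᵀ, eigenvalues λ₁,…,λ_n ordered so that |f(λ₁)| ≥ … ≥ |f(λ_n)|, and write U = [U_k, U_{n∖k}], Λ = diag(Λ_k, Λ_{n∖k}). Let Ω ∈ ℝ^{n×ℓ} with ℓ ≥ k, set Ω_k = U_kᵀΩ, Ω_{n∖k} = U_{n∖k}ᵀΩ, and assume rank(Ω_k) = k. Let p be a polynomial of degree ≤ s−1 with p(λ_i) ≠ 0 for i = 1,…,k, and let P̃ be the orthogonal projector onto range(p(A) Ω Ω_k† p(Λ_k)^{−1}). Then ‖(I − Û P̂) f(Λ)‖_F² ≤ ‖f(Λ_{n∖k})‖_F² + ‖p(Λ_{n∖k}) Ω_{n∖k} Ω_k†‖_F² · max_{1≤i≤k} |f(λ_i)/p(λ_i)|², where P̂ = Uᵀ P̃ U. -/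
/-!
`P̂` is the orthogonal projector `V (VᵀV)⁻¹ Vᵀ` onto the range of `V = [I; F]`, so for a diagonal
`D = diag d` one has `‖(I - P̂) D‖_F² = ∑ⱼ dⱼ² (I - P̂)ⱼⱼ`. The diagonal entries of `I - P̂` are at
most `1`, and its top-left block is `I - (I + FᵀF)⁻¹ = FᵀF (I + FᵀF)⁻¹`, whose diagonal is
dominated by that of `FᵀF` because the difference `FᵀF (I + FᵀF)⁻¹ FᵀF` is positive semidefinite.
Hence the top block contributes at most `∑ᵢ f(λᵢ)² (FᵀF)ᵢᵢ = ‖F f(Λ_k)‖_F²`, and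
`F f(Λ_k) = p(Λ_{n∖k}) Ω_{n∖k} Ω_k† diag(f(λᵢ)/p(λᵢ))`.
-/

open Matrix BigOperators

section FrobNorm

variable {m n : Type*} [Fintype m] [Fintype n]

lemma frobNorm_sq (M : Matrix m n ℝ) : frobNorm M ^ 2 = ∑ i, ∑ j, M i j ^ 2 :=
  Real.sq_sqrt <| Finset.sum_nonneg fun _ _ => Finset.sum_nonneg fun _ _ => sq_nonneg _

variable [DecidableEq n]

lemma frobNorm_mul_diagonal_sq (M : Matrix m n ℝ) (w : n → ℝ) :
    frobNorm (M * diagonal w) ^ 2 = ∑ i, ∑ j, w j ^ 2 * M i j ^ 2 := by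
  simp only [frobNorm_sq, mul_diagonal, mul_pow, mul_comm]

lemma frobNorm_mul_diagonal_sq_le (M : Matrix m n ℝ) (w : n → ℝ) :
    frobNorm (M * diagonal w) ^ 2 ≤ frobNorm M ^ 2 * ⨆ j, w j ^ 2 := by
  have hw : ∀ j, w j ^ 2 ≤ ⨆ j, w j ^ 2 := le_ciSup (Set.finite_range _).bddAbove
  calc frobNorm (M * diagonal w) ^ 2 = ∑ i, ∑ j, w j ^ 2 * M i j ^ 2 :=
        frobNorm_mul_diagonal_sq M w
    _ ≤ ∑ i, ∑ j, (⨆ j, w j ^ 2) * M i j ^ 2 := by gcongr with i _ j _; exact hw j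
    _ = frobNorm M ^ 2 * ⨆ j, w j ^ 2 := by
      simp only [frobNorm_sq, Finset.sum_mul, mul_comm]

lemma frobNorm_mul_diagonal_sq_of_isSymm_of_isIdempotentElem {Q : Matrix n n ℝ} (hQ : Q.IsSymm)
    (hQQ : IsIdempotentElem Q) (d : n → ℝ) :
    frobNorm (Q * diagonal d) ^ 2 = ∑ j, d j ^ 2 * Q j j := by
  have hcol : ∀ j, ∑ i, Q i j ^ 2 = Q j j := fun j => by
    conv_rhs => rw [← hQQ.eq, ← congrArg (· * Q) hQ.eq]
    simp only [mul_apply, transpose_apply, sq]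
  rw [frobNorm_mul_diagonal_sq, Finset.sum_comm]
  simp only [← Finset.mul_sum, hcol]

end FrobNorm

lemma Matrix.PosSemidef.diag_one_sub_inv_one_add_le {n : Type*} [Fintype n] [DecidableEq n]
    {B : Matrix n n ℝ} (hB : B.PosSemidef) (i : n) : (1 - (1 + B)⁻¹) i i ≤ B i i := by
  have hunit : IsUnit (1 + B).det := (PosDef.one.add_posSemidef hB).det_pos.ne'.isUnit
  set G := (1 + B)⁻¹
  have hBG : B * G = 1 - G := by
    rw [eq_sub_iff_add_eq, ← add_one_mul, add_comm, mul_nonsing_inv _ hunit]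
  have hGB : G * B = 1 - G := by
    rw [eq_sub_iff_add_eq, ← mul_add_one, add_comm, nonsing_inv_mul _ hunit]
  -- `B - (1 - G) = B G B`, which is positive semidefinite
  have hBGB : (B * G * B).PosSemidef := by
    simpa only [hB.isHermitian.eq] using
      ((PosDef.one.add_posSemidef hB).inv.posSemidef).conjTranspose_mul_mul_same B
  have h0 := hBGB.diag_nonneg (i := i)
  rw [mul_assoc, hGB, mul_sub, mul_one, hBG, sub_apply B] at h0
  linarith

lemma Matrix.posSemidef_transpose_mul_self {m n : Type*} [Fintype m] [Fintype n]
    (F : Matrix m n ℝ) : (Fᵀ * F).PosSemidef := by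
  simpa only [conjTranspose_eq_transpose_of_trivial] using posSemidef_conjTranspose_mul_self F

lemma Matrix.posDef_one_add_transpose_mul_self {m n : Type*} [Fintype m] [Fintype n]
    [DecidableEq n] (F : Matrix m n ℝ) : (1 + Fᵀ * F).PosDef :=
  PosDef.one.add_posSemidef (posSemidef_transpose_mul_self F)

lemma Matrix.fromRows_one_mul_mul_transpose {m n : Type*} [Fintype n] [DecidableEq n]
    (F : Matrix m n ℝ) (G : Matrix n n ℝ) :
    (fromRows 1 F : Matrix (n ⊕ m) n ℝ) * G * (fromRows 1 F)ᵀ =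
      fromBlocks G (G * Fᵀ) (F * G) (F * G * Fᵀ) := by
  rw [transpose_fromRows, transpose_one, fromRows_mul, fromRows_mul_fromCols]
  simp only [Matrix.one_mul, Matrix.mul_one]

lemma Matrix.transpose_fromRows_one_mul_self {m n : Type*} [Fintype m] [Fintype n]
    [DecidableEq n] (F : Matrix m n ℝ) :
    (fromRows 1 F : Matrix (n ⊕ m) n ℝ)ᵀ * (fromRows 1 F : Matrix (n ⊕ m) n ℝ) = 1 + Fᵀ * F := by
  rw [transpose_fromRows, transpose_one, fromCols_mul_fromRows, Matrix.one_mul]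

section GraphProjector

variable {k m : Type*} [Fintype k] [Fintype m] [DecidableEq k]

noncomputable def graphProjector (F : Matrix m k ℝ) : Matrix (k ⊕ m) (k ⊕ m) ℝ :=
  (fromRows 1 F : Matrix (k ⊕ m) k ℝ) * (1 + Fᵀ * F)⁻¹ * (fromRows 1 F)ᵀ

lemma isSymm_graphProjector (F : Matrix m k ℝ) : (graphProjector F).IsSymm := by
  have hG : ((1 + Fᵀ * F)⁻¹).IsSymm := by
    rw [IsSymm, transpose_nonsing_inv, transpose_add, transpose_one, transpose_mul,
      transpose_transpose]
  rw [graphProjector, IsSymm, transpose_mul, transpose_mul, transpose_transpose, hG.eq,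
    Matrix.mul_assoc]

lemma isIdempotentElem_graphProjector (F : Matrix m k ℝ) :
    IsIdempotentElem (graphProjector F) := by
  have hunit := (posDef_one_add_transpose_mul_self F).det_pos.ne'.isUnit
  rw [IsIdempotentElem, graphProjector]
  simp only [Matrix.mul_assoc]
  rw [← Matrix.mul_assoc (fromRows 1 F)ᵀ, transpose_fromRows_one_mul_self,
    ← Matrix.mul_assoc (1 + Fᵀ * F), mul_nonsing_inv _ hunit, Matrix.one_mul]

variable [DecidableEq m]

lemma one_sub_graphProjector_inl_inl_le (F : Matrix m k ℝ) (i : k) :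
    (1 - graphProjector F) (.inl i) (.inl i) ≤ (Fᵀ * F) i i := by
  have h := (posSemidef_transpose_mul_self F).diag_one_sub_inv_one_add_le i
  rw [graphProjector, fromRows_one_mul_mul_transpose]
  simp only [Matrix.sub_apply, one_apply_eq, fromBlocks_apply₁₁] at h ⊢
  exact h

lemma one_sub_graphProjector_inr_inr_le (F : Matrix m k ℝ) (j : m) :
    (1 - graphProjector F) (.inr j) (.inr j) ≤ 1 := by
  have h := ((posDef_one_add_transpose_mul_self F).inv.posSemidef.mul_mul_conjTranspose_same
    F).diag_nonneg (i := j)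
  rw [graphProjector, fromRows_one_mul_mul_transpose]
  simp only [Matrix.sub_apply, one_apply_eq, fromBlocks_apply₂₂,
    conjTranspose_eq_transpose_of_trivial] at h ⊢
  linarith

lemma frobNorm_one_sub_graphProjector_mul_diagonal_sq_le (F : Matrix m k ℝ) (d₁ : k → ℝ)
    (d₂ : m → ℝ) :
    frobNorm ((1 - graphProjector F) * diagonal (Sum.elim d₁ d₂)) ^ 2 ≤
      ∑ j, d₂ j ^ 2 + frobNorm (F * diagonal d₁) ^ 2 := by
  rw [frobNorm_mul_diagonal_sq_of_isSymm_of_isIdempotentElem (isSymm_one.sub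
      (isSymm_graphProjector F)) (isIdempotentElem_graphProjector F).one_sub,
    Fintype.sum_sum_type, add_comm]
  gcongr with j _ i _
  · simpa using
      mul_le_mul_of_nonneg_left (one_sub_graphProjector_inr_inr_le F j) (sq_nonneg (d₂ j))
  · calc ∑ i, d₁ i ^ 2 * (1 - graphProjector F) (.inl i) (.inl i)
          ≤ ∑ i, d₁ i ^ 2 * (Fᵀ * F) i i := by
            gcongr with i _
            exact one_sub_graphProjector_inl_inl_le F i
        _ = frobNorm (F * diagonal d₁) ^ 2 := by
            rw [frobNorm_mul_diagonal_sq, Finset.sum_comm]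
            simp only [mul_apply, transpose_apply, Finset.mul_sum, sq]

end GraphProjector

-- Everything is written in the eigenbasis of `A`: `μ1`, `μ2` are the diagonals of `Λ_k`,
-- `Λ_{n∖k}`, and `Ωk`, `Ω2` stand for `U_kᵀ Ω`, `U_{n∖k}ᵀ Ω`.
theorem stmt9_general {k m ℓ : ℕ}
    (f : ℝ → ℝ) (p : Polynomial ℝ)
    (μ1 : Fin k → ℝ) (μ2 : Fin m → ℝ)
    (hp : ∀ i, p.eval (μ1 i) ≠ 0)
    (Ωk : Matrix (Fin k) (Fin ℓ) ℝ) (Ω2 : Matrix (Fin m) (Fin ℓ) ℝ) :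
    let Ωdag : Matrix (Fin ℓ) (Fin k) ℝ := Ωkᵀ * (Ωk * Ωkᵀ)⁻¹
    let F : Matrix (Fin m) (Fin k) ℝ :=
      Matrix.diagonal (fun j => p.eval (μ2 j)) * Ω2 * Ωdag *
        (Matrix.diagonal (fun i => p.eval (μ1 i)))⁻¹
    let G : Matrix (Fin k) (Fin k) ℝ := (1 + Fᵀ * F)⁻¹
    let Phat : Matrix (Fin k ⊕ Fin m) (Fin k ⊕ Fin m) ℝ :=
      Matrix.fromBlocks G (G * Fᵀ) (F * G) (F * G * Fᵀ)
    let fΛ : Matrix (Fin k ⊕ Fin m) (Fin k ⊕ Fin m) ℝ :=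
      Matrix.diagonal (Sum.elim (fun i => f (μ1 i)) (fun j => f (μ2 j)))
    frobNorm ((1 - Phat) * fΛ) ^ 2
      ≤ (∑ j, (f (μ2 j)) ^ 2) +
        frobNorm (Matrix.diagonal (fun j => p.eval (μ2 j)) * Ω2 * Ωdag) ^ 2 *
          (⨆ i : Fin k, (f (μ1 i) / p.eval (μ1 i)) ^ 2) := by
  intro Ωdag F G Phat fΛ
  set M := Matrix.diagonal (fun j => p.eval (μ2 j)) * Ω2 * Ωdag
  have hPhat : Phat = graphProjector F := (fromRows_one_mul_mul_transpose F G).symm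
  have hinv : (diagonal fun i => p.eval (μ1 i))⁻¹ = diagonal fun i => (p.eval (μ1 i))⁻¹ :=
    inv_eq_left_inv <| by
      rw [diagonal_mul_diagonal, ← diagonal_one]
      exact congrArg diagonal (funext fun i => inv_mul_cancel₀ (hp i))
  have hFf : F * diagonal (fun i => f (μ1 i)) =
      M * diagonal (fun i => f (μ1 i) / p.eval (μ1 i)) := by
    change M * _ * _ = _
    rw [hinv, Matrix.mul_assoc, diagonal_mul_diagonal]
    simp only [div_eq_inv_mul]
  calc frobNorm ((1 - Phat) * fΛ) ^ 2
      ≤ ∑ j, f (μ2 j) ^ 2 + frobNorm (F * diagonal fun i => f (μ1 i)) ^ 2 :=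
        hPhat ▸ frobNorm_one_sub_graphProjector_mul_diagonal_sq_le F _ _
    _ ≤ _ := by
      rw [hFf]
      gcongr
      exact frobNorm_mul_diagonal_sq_le M _

/-- Bound on `‖(I − P̂) f(Λ)‖_F²` where `P̂` is the orthogonal projector onto
`range([I; F])` with `F = p(Λ_{n∖k}) Ω_{n∖k} Ω_k† p(Λ_k)⁻¹`.  The eigenvalues are
split as `μ1 : Fin k → ℝ` (top `k` by `|f|`) and `μ2 : Fin m → ℝ` (the rest). -/
theorem stmt9 {k m ℓ : ℕ} [NeZero k] (hℓ : k ≤ ℓ)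
    (f : ℝ → ℝ) (p : Polynomial ℝ) (s : ℕ) (hdeg : p.natDegree ≤ s - 1)
    (μ1 : Fin k → ℝ) (μ2 : Fin m → ℝ)
    (horder : ∀ i j, |f (μ2 j)| ≤ |f (μ1 i)|)
    (hp : ∀ i, p.eval (μ1 i) ≠ 0)
    (Ωk : Matrix (Fin k) (Fin ℓ) ℝ) (Ω2 : Matrix (Fin m) (Fin ℓ) ℝ)
    (hrank : Ωk * (Ωkᵀ * (Ωk * Ωkᵀ)⁻¹) = 1) :
    let Ωdag : Matrix (Fin ℓ) (Fin k) ℝ := Ωkᵀ * (Ωk * Ωkᵀ)⁻¹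
    let F : Matrix (Fin m) (Fin k) ℝ :=
      Matrix.diagonal (fun j => p.eval (μ2 j)) * Ω2 * Ωdag *
        (Matrix.diagonal (fun i => p.eval (μ1 i)))⁻¹
    let G : Matrix (Fin k) (Fin k) ℝ := (1 + Fᵀ * F)⁻¹
    let Phat : Matrix (Fin k ⊕ Fin m) (Fin k ⊕ Fin m) ℝ :=
      Matrix.fromBlocks G (G * Fᵀ) (F * G) (F * G * Fᵀ)
    let fΛ : Matrix (Fin k ⊕ Fin m) (Fin k ⊕ Fin m) ℝ :=
      Matrix.diagonal (Sum.elim (fun i => f (μ1 i)) (fun j => f (μ2 j)))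
    frobNorm ((1 - Phat) * fΛ) ^ 2
      ≤ (∑ j, (f (μ2 j)) ^ 2) +
        frobNorm (Matrix.diagonal (fun j => p.eval (μ2 j)) * Ω2 * Ωdag) ^ 2 *
          (⨆ i : Fin k, (f (μ1 i) / p.eval (μ1 i)) ^ 2) :=
  stmt9_general f p μ1 μ2 hp Ωk Ω2
end

section
/- Under the setup where P̂ is the orthogonal projector onto the range of the block matrix [I_k; F] with F = p(Λ_{n∖k}) Ω_{n∖k} Ω_k† p(Λ_k)^{−1}, the cross term satisfies ‖diag(0, f(Λ_{n∖k})) · P̂‖_F ≤ ‖p(Λ_{n∖k}) Ω_{n∖k} Ω_k†‖_F · max_{1≤i≤k} |f(λ_i)/p(λ_i)|, provided ‖f(Λ_{n∖k})‖₂ ≤ min_{1≤i≤k}|f(λ_i)| holds in the sense used (i.e., eigenvalues ordered by |f|). -/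
/-!
Write `G = (I + FᵀF)⁻¹` and `D = f(Λ_{n∖k})`. The lower block row of `P̂` is `F G [I, Fᵀ]`, so the
cross term is `[0; D F G [I, Fᵀ]]`, whose squared Frobenius norm is
`tr (D F G (I + FᵀF) G Fᵀ D) = tr (D F G Fᵀ D) ≤ tr (D F Fᵀ D) = ‖D F‖²_F`, because `I - G ⪰ 0`.
Finally `D F` is `p(Λ_{n∖k}) Ω_{n∖k} Ω_k†` with column `i` scaled by `f(λ_j)/p(λ_i)` in row `j`, and
`|f(λ_j)| ≤ |f(λ_i)|` bounds every such factor by `max_i |f(λ_i)/p(λ_i)|`.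
-/

open Matrix BigOperators

namespace Matrix

section frobNorm

variable {m n p q : Type*} [Fintype m] [Fintype n] [Fintype p] [Fintype q]

lemma frobNorm_sq (M : Matrix m n ℝ) : frobNorm M ^ 2 = ∑ i, ∑ j, M i j ^ 2 :=
  Real.sq_sqrt (by positivity)

lemma frobNorm_sq_eq_trace (M : Matrix m n ℝ) : frobNorm M ^ 2 = (M * Mᵀ).trace := by
  rw [frobNorm_sq]
  simp [trace, mul_apply, sq]

@[simp]
lemma frobNorm_zero : frobNorm (0 : Matrix m n ℝ) = 0 := by
  simp [frobNorm]

lemma frobNorm_fromBlocks_sq (A : Matrix n p ℝ) (B : Matrix n q ℝ) (C : Matrix m p ℝ)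
    (D : Matrix m q ℝ) :
    frobNorm (fromBlocks A B C D) ^ 2 =
      frobNorm A ^ 2 + frobNorm B ^ 2 + frobNorm C ^ 2 + frobNorm D ^ 2 := by
  simp only [frobNorm_sq, Fintype.sum_sum_type, fromBlocks_apply₁₁, fromBlocks_apply₁₂,
    fromBlocks_apply₂₁, fromBlocks_apply₂₂, Finset.sum_add_distrib]
  ring

lemma frobNorm_le_of_sq_le {M : Matrix m n ℝ} {N : Matrix p q ℝ}
    (h : frobNorm M ^ 2 ≤ frobNorm N ^ 2) : frobNorm M ≤ frobNorm N :=
  (pow_le_pow_iff_left₀ (Real.sqrt_nonneg _) (Real.sqrt_nonneg _) two_ne_zero).mp h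

lemma frobNorm_le_mul_of_abs_le {M N : Matrix m n ℝ} {c : ℝ} (hc : 0 ≤ c)
    (h : ∀ i j, |M i j| ≤ |N i j| * c) : frobNorm M ≤ frobNorm N * c := by
  refine (pow_le_pow_iff_left₀ (Real.sqrt_nonneg _) (mul_nonneg (Real.sqrt_nonneg _) hc)
    two_ne_zero).mp ?_
  calc frobNorm M ^ 2 = ∑ i, ∑ j, |M i j| ^ 2 := by simp only [frobNorm_sq, sq_abs]
    _ ≤ ∑ i, ∑ j, (|N i j| * c) ^ 2 := by gcongr with i _ j _; exact h i j
    _ = (frobNorm N * c) ^ 2 := by simp only [mul_pow, sq_abs, frobNorm_sq, Finset.sum_mul]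

end frobNorm

section projector

variable {l m k : Type*} [Fintype l] [Fintype m] [Fintype k]

lemma posSemidef_transpose_mul_self_s10 (F : Matrix m k ℝ) : (Fᵀ * F).PosSemidef := by
  simpa using posSemidef_conjTranspose_mul_self F

variable [DecidableEq k]

lemma isUnit_det_one_add_transpose_mul (F : Matrix m k ℝ) : IsUnit (1 + Fᵀ * F).det :=
  (isUnit_iff_isUnit_det _).mp (PosDef.one.add_posSemidef (posSemidef_transpose_mul_self_s10 F)).isUnit

lemma posSemidef_one_sub_inv_one_add_transpose_mul (F : Matrix m k ℝ) :
    (1 - (1 + Fᵀ * F)⁻¹).PosSemidef := by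
  have hunit := isUnit_det_one_add_transpose_mul F
  set A := Fᵀ * F
  set G := (1 + A)⁻¹
  have hA : A.PosSemidef := posSemidef_transpose_mul_self_s10 F
  have hG : Gᴴ = G := by
    rw [conjTranspose_nonsing_inv, conjTranspose_add, conjTranspose_one, hA.isHermitian.eq]
  have hAA : (A + A * A).PosSemidef :=
    hA.add (by simpa [A, Matrix.transpose_mul] using posSemidef_transpose_mul_self_s10 A)
  have hconj : G * (A + A * A) * G = 1 - G := by
    have hsq : A + A * A = (1 + A) * (1 + A) - (1 + A) := by noncomm_ring
    rw [hsq, Matrix.mul_sub, Matrix.sub_mul, ← Matrix.mul_assoc, nonsing_inv_mul _ hunit,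
      Matrix.one_mul, mul_nonsing_inv _ hunit, Matrix.one_mul]
  have hpsd := hAA.mul_mul_conjTranspose_same G
  rwa [hG, hconj] at hpsd

lemma frobNorm_sq_mul_inv_one_add_add_le (N : Matrix l k ℝ) (F : Matrix m k ℝ) :
    frobNorm (N * (1 + Fᵀ * F)⁻¹) ^ 2 + frobNorm (N * (1 + Fᵀ * F)⁻¹ * Fᵀ) ^ 2 ≤
      frobNorm N ^ 2 := by
  have hunit := isUnit_det_one_add_transpose_mul F
  set G := (1 + Fᵀ * F)⁻¹
  have hGt : Gᵀ = G := by simp [G, transpose_nonsing_inv, Matrix.transpose_mul]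
  have hsum : N * G * (N * G)ᵀ + N * G * Fᵀ * (N * G * Fᵀ)ᵀ = N * G * Nᵀ := by
    calc _ = N * (G * (1 + Fᵀ * F)) * G * Nᵀ := by
          simp only [Matrix.transpose_mul, hGt, transpose_transpose, Matrix.mul_add,
            Matrix.add_mul, Matrix.mul_one, Matrix.mul_assoc]
      _ = N * G * Nᵀ := by rw [nonsing_inv_mul _ hunit, Matrix.mul_one]
  have hgap : (N * (1 - G) * Nᵀ).trace = (N * Nᵀ).trace - (N * G * Nᵀ).trace := by
    rw [Matrix.mul_sub, Matrix.mul_one, Matrix.sub_mul, trace_sub]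
  have hpsd : 0 ≤ (N * (1 - G) * Nᵀ).trace := by
    simpa using ((posSemidef_one_sub_inv_one_add_transpose_mul F).mul_mul_conjTranspose_same
      N).trace_nonneg
  rw [frobNorm_sq_eq_trace, frobNorm_sq_eq_trace, frobNorm_sq_eq_trace, ← trace_add, hsum]
  linarith

end projector

end Matrix

theorem stmt10_general {k m ℓ : ℕ}
    (f : ℝ → ℝ) (p : Polynomial ℝ)
    (μ1 : Fin k → ℝ) (μ2 : Fin m → ℝ)
    (horder : ∀ j i, |f (μ2 j)| ≤ |f (μ1 i)|)
    (hp : ∀ i, p.eval (μ1 i) ≠ 0)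
    (Ωk : Matrix (Fin k) (Fin ℓ) ℝ) (Ω2 : Matrix (Fin m) (Fin ℓ) ℝ) :
    let Ωdag : Matrix (Fin ℓ) (Fin k) ℝ := Ωkᵀ * (Ωk * Ωkᵀ)⁻¹
    let F : Matrix (Fin m) (Fin k) ℝ :=
      Matrix.diagonal (fun j => p.eval (μ2 j)) * Ω2 * Ωdag *
        (Matrix.diagonal (fun i => p.eval (μ1 i)))⁻¹
    let G : Matrix (Fin k) (Fin k) ℝ := (1 + Fᵀ * F)⁻¹
    let Phat : Matrix (Fin k ⊕ Fin m) (Fin k ⊕ Fin m) ℝ :=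
      Matrix.fromBlocks G (G * Fᵀ) (F * G) (F * G * Fᵀ)
    frobNorm (Matrix.fromBlocks 0 0 0 (Matrix.diagonal (fun j => f (μ2 j))) * Phat)
      ≤ frobNorm (Matrix.diagonal (fun j => p.eval (μ2 j)) * Ω2 * Ωdag) *
          (⨆ i : Fin k, |f (μ1 i) / p.eval (μ1 i)|) := by
  intro Ωdag F G Phat
  set B := diagonal (fun j => p.eval (μ2 j)) * Ω2 * Ωdag
  set D := diagonal (fun j => f (μ2 j))
  have hcross : fromBlocks 0 0 0 D * Phat = fromBlocks 0 0 (D * F * G) (D * F * G * Fᵀ) := by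
    simp [Phat, fromBlocks_multiply, Matrix.mul_assoc]
  have hinv : (diagonal fun i => p.eval (μ1 i))⁻¹ = diagonal fun i => (p.eval (μ1 i))⁻¹ :=
    inv_eq_right_inv (by simp [diagonal_mul_diagonal, hp])
  have hentry : ∀ j i, (D * F) j i = B j i * (f (μ2 j) / p.eval (μ1 i)) := fun j i => by
    simp only [D, F, hinv, diagonal_mul, mul_diagonal, B]
    ring
  have hratio : ∀ j i, |f (μ2 j) / p.eval (μ1 i)| ≤ ⨆ i, |f (μ1 i) / p.eval (μ1 i)| :=
    fun j i => calc
      |f (μ2 j) / p.eval (μ1 i)| ≤ |f (μ1 i) / p.eval (μ1 i)| := by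
        simp only [abs_div]; exact div_le_div_of_nonneg_right (horder j i) (abs_nonneg _)
      _ ≤ _ := le_ciSup (f := fun i => |f (μ1 i) / p.eval (μ1 i)|)
          (Set.finite_range _).bddAbove i
  calc frobNorm (fromBlocks 0 0 0 D * Phat) ≤ frobNorm (D * F) := by
        refine frobNorm_le_of_sq_le ?_
        simpa [hcross, frobNorm_fromBlocks_sq, Matrix.mul_assoc] using
          frobNorm_sq_mul_inv_one_add_add_le (D * F) F
    _ ≤ frobNorm B * ⨆ i, |f (μ1 i) / p.eval (μ1 i)| :=
        frobNorm_le_mul_of_abs_le (Real.iSup_nonneg fun _ => abs_nonneg _) fun j i => by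
          rw [hentry, abs_mul]; gcongr; exact hratio j i

/-- Cross-term bound: `‖diag(0, f(Λ_{n∖k})) P̂‖_F ≤ ‖p(Λ_{n∖k}) Ω_{n∖k} Ω_k†‖_F ·
max_i |f(λ_i)/p(λ_i)|`, where `P̂` projects onto `range([I; F])`. -/
theorem stmt10 {k m ℓ : ℕ} [NeZero k] (hℓ : k ≤ ℓ)
    (f : ℝ → ℝ) (p : Polynomial ℝ)
    (μ1 : Fin k → ℝ) (μ2 : Fin m → ℝ)
    (horder : ∀ j i, |f (μ2 j)| ≤ |f (μ1 i)|)
    (hp : ∀ i, p.eval (μ1 i) ≠ 0)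
    (Ωk : Matrix (Fin k) (Fin ℓ) ℝ) (Ω2 : Matrix (Fin m) (Fin ℓ) ℝ)
    (hrank : Ωk * (Ωkᵀ * (Ωk * Ωkᵀ)⁻¹) = 1) :
    let Ωdag : Matrix (Fin ℓ) (Fin k) ℝ := Ωkᵀ * (Ωk * Ωkᵀ)⁻¹
    let F : Matrix (Fin m) (Fin k) ℝ :=
      Matrix.diagonal (fun j => p.eval (μ2 j)) * Ω2 * Ωdag *
        (Matrix.diagonal (fun i => p.eval (μ1 i)))⁻¹
    let G : Matrix (Fin k) (Fin k) ℝ := (1 + Fᵀ * F)⁻¹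
    let Phat : Matrix (Fin k ⊕ Fin m) (Fin k ⊕ Fin m) ℝ :=
      Matrix.fromBlocks G (G * Fᵀ) (F * G) (F * G * Fᵀ)
    frobNorm (Matrix.fromBlocks 0 0 0 (Matrix.diagonal (fun j => f (μ2 j))) * Phat)
      ≤ frobNorm (Matrix.diagonal (fun j => p.eval (μ2 j)) * Ω2 * Ωdag) *
          (⨆ i : Fin k, |f (μ1 i) / p.eval (μ1 i)|) :=
  stmt10_general f p μ1 μ2 horder hp Ωk Ω2
end

section
/- Let g(x) = x − λ_n − (s−2)·log(h(η(x))), where η(x) = (x − λ_{k+1})/(λ_{k+1} − λ_n) and h(η) = 1 + 2η + 2√(η + η²). Then g is convex on [λ_k, λ₁] (where λ_k ≥ λ_{k+1}), so its maximum on [λ_k, λ₁] is attained at an endpoint; moreover if s ≥ 2 + (λ₁ − λ_k)/log((λ₁ − λ_n)/(λ_k − λ_n)), then the maximum is attained at x = λ_k. -/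
/-!
With `z = 1 + 2η` one has `h(η) = z + √(z² − 1)`, so `log h(η) = arcosh (1 + 2η)`. Since the
derivative `(z² − 1)^(-1/2)` of `arcosh` decreases, `log ∘ h ∘ η` is concave and `g` is convex,
hence maximal at an endpoint of `[λ_k, λ₁]`. Writing `h(t) = (1 + t)(1 + √(t / (1 + t)))²` shows
that `h(t) / (1 + t)` increases, so `log h(η λ₁) − log h(η λ_k) ≥ log ((λ₁ − λ_n) / (λ_k − λ_n))`,
which with the bound on `s` gives `g λ₁ ≤ g λ_k`.
-/

open Real Set

noncomputable def chebyshevBase (t : ℝ) : ℝ := 1 + 2 * t + 2 * √(t + t ^ 2)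

lemma concaveOn_arcosh : ConcaveOn ℝ (Ici 1) arcosh := by
  refine AntitoneOn.concaveOn_of_deriv (convex_Ici 1) continuousOn_arcosh
    (by rw [interior_Ici]; exact differentiableOn_arcosh) ?_
  rw [interior_Ici]
  intro x hx y hy hxy
  rw [(hasDerivAt_arcosh hx).deriv, (hasDerivAt_arcosh hy).deriv]
  have hx1 : 0 < x ^ 2 - 1 := by nlinarith [mem_Ioi.1 hx]
  exact inv_anti₀ (sqrt_pos.2 hx1) (sqrt_le_sqrt (by nlinarith [mem_Ioi.1 hx]))

lemma log_chebyshevBase (t : ℝ) : log (chebyshevBase t) = arcosh (1 + 2 * t) := by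
  have : √((1 + 2 * t) ^ 2 - 1) = 2 * √(t + t ^ 2) := by
    rw [show (1 + 2 * t) ^ 2 - 1 = 2 ^ 2 * (t + t ^ 2) by ring, sqrt_mul (by norm_num),
      sqrt_sq zero_le_two]
  rw [arcosh, this, chebyshevBase]

lemma ConcaveOn.comp_mul_add {f : ℝ → ℝ} {s : Set ℝ} (hf : ConcaveOn ℝ s f) (m c : ℝ) :
    ConcaveOn ℝ ((fun x => m * x + c) ⁻¹' s) (fun x => f (m * x + c)) :=
  hf.comp_affineMap ((LinearMap.lsmul ℝ ℝ m).toAffineMap + AffineMap.const ℝ ℝ c)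

lemma concaveOn_log_chebyshevBase_div {c d : ℝ} (hd : 0 < d) :
    ConcaveOn ℝ (Ici c) (fun x => log (chebyshevBase ((x - c) / d))) := by
  refine ((concaveOn_arcosh.comp_mul_add (2 / d) (1 - 2 * c / d)).subset ?_
    (convex_Ici c)).congr ?_
  · intro x hx
    have hη : 0 ≤ (x - c) / d := div_nonneg (sub_nonneg.2 hx) hd.le
    simp only [mem_preimage, mem_Ici]
    rw [show 2 / d * x + (1 - 2 * c / d) = 1 + 2 * ((x - c) / d) by ring]
    linarith
  · intro x _
    dsimp only
    rw [log_chebyshevBase]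
    ring_nf

lemma convexOn_sub_mul_log_chebyshevBase (a : ℝ) {c d k : ℝ} (hd : 0 < d) (hk : 0 ≤ k) :
    ConvexOn ℝ (Ici c) (fun x => x - a - k * log (chebyshevBase ((x - c) / d))) := by
  refine (((convexOn_id (convex_Ici c)).add_const (-a)).sub
    ((concaveOn_log_chebyshevBase_div hd).smul hk)).congr fun x _ => ?_
  simp only [Pi.sub_apply, Pi.add_apply, id, smul_eq_mul]
  ring

lemma chebyshevBase_eq_mul_sq {t : ℝ} (ht : 0 ≤ t) :
    chebyshevBase t = (1 + t) * (1 + √(t / (1 + t))) ^ 2 := by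
  have h1t : 0 < 1 + t := by linarith
  have hsq : (1 + t) * √(t / (1 + t)) = √(t + t ^ 2) := by
    rw [show t + t ^ 2 = (1 + t) ^ 2 * (t / (1 + t)) by field_simp,
      sqrt_mul (sq_nonneg _), sqrt_sq h1t.le]
  rw [chebyshevBase, add_sq, sq_sqrt (div_nonneg ht h1t.le), mul_add, mul_add,
    mul_div_cancel₀ _ h1t.ne', ← hsq]
  ring

lemma chebyshevBase_pos {t : ℝ} (ht : 0 ≤ t) : 0 < chebyshevBase t := by
  unfold chebyshevBase; positivity

lemma one_add_div_le_chebyshevBase_div {x y : ℝ} (hy : 0 ≤ y) (hyx : y ≤ x) :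
    (1 + x) / (1 + y) ≤ chebyshevBase x / chebyshevBase y := by
  have hx : 0 ≤ x := hy.trans hyx
  have hmono : y / (1 + y) ≤ x / (1 + x) := by
    rw [div_le_div_iff₀ (by linarith) (by linarith)]; linarith
  rw [chebyshevBase_eq_mul_sq hx, chebyshevBase_eq_mul_sq hy, mul_div_mul_comm]
  refine le_mul_of_one_le_right (by positivity) ((one_le_div (by positivity)).2 ?_)
  gcongr

lemma log_div_le_log_chebyshevBase_sub {a c x y : ℝ} (hac : a < c) (hcy : c ≤ y) (hyx : y ≤ x) :
    log ((x - a) / (y - a)) ≤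
      log (chebyshevBase ((x - c) / (c - a))) - log (chebyshevBase ((y - c) / (c - a))) := by
  have hca : 0 < c - a := sub_pos.2 hac
  have hy : 0 ≤ (y - c) / (c - a) := div_nonneg (sub_nonneg.2 hcy) hca.le
  have hyx' : (y - c) / (c - a) ≤ (x - c) / (c - a) := by gcongr
  have hratio : (x - a) / (y - a) = (1 + (x - c) / (c - a)) / (1 + (y - c) / (c - a)) := by
    field_simp; ring
  rw [← log_div (chebyshevBase_pos (hy.trans hyx')).ne' (chebyshevBase_pos hy).ne', hratio]
  exact log_le_log (div_pos (by linarith) (by linarith))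
    (one_add_div_le_chebyshevBase_div hy hyx')

/-- Convexity of `g(x) = x − λ_n − (s−2)·log(h(η(x)))` on `[λ_k, λ₁]`, endpoint
maximization, and attainment at `λ_k` under the degree condition on `s`. -/
theorem stmt15 (lam1 lamk lamk1 lamn : ℝ)
    (h1 : lamk < lam1) (h2 : lamk1 < lamk) (h3 : lamn < lamk1)
    (s : ℕ) (hs : 2 ≤ s) :
    let η : ℝ → ℝ := fun x => (x - lamk1) / (lamk1 - lamn)
    let h : ℝ → ℝ := fun t => 1 + 2 * t + 2 * Real.sqrt (t + t ^ 2)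
    let g : ℝ → ℝ := fun x => x - lamn - ((s : ℝ) - 2) * Real.log (h (η x))
    ConvexOn ℝ (Set.Icc lamk lam1) g ∧
    (∀ x ∈ Set.Icc lamk lam1, g x ≤ max (g lamk) (g lam1)) ∧
    (2 + (lam1 - lamk) / Real.log ((lam1 - lamn) / (lamk - lamn)) ≤ (s : ℝ) →
      ∀ x ∈ Set.Icc lamk lam1, g x ≤ g lamk) := by
  intro η h g
  have hs2 : (0 : ℝ) ≤ s - 2 := by
    rw [sub_nonneg]; exact_mod_cast hs
  have hconv : ConvexOn ℝ (Icc lamk lam1) g :=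
    (convexOn_sub_mul_log_chebyshevBase lamn (sub_pos.2 h3) hs2).subset
      (Icc_subset_Ici_self.trans (Ici_subset_Ici.2 h2.le)) (convex_Icc _ _)
  have hmax : ∀ x ∈ Icc lamk lam1, g x ≤ max (g lamk) (g lam1) := fun x hx =>
    hconv.le_max_of_mem_Icc (left_mem_Icc.2 h1.le) (right_mem_Icc.2 h1.le) hx
  refine ⟨hconv, hmax, fun hs_ge x hx => (hmax x hx).trans (max_le le_rfl ?_)⟩
  have hL : 0 < log ((lam1 - lamn) / (lamk - lamn)) :=
    log_pos ((one_lt_div (by linarith)).2 (by linarith))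
  have hgap : lam1 - lamk ≤ (s - 2) * log ((lam1 - lamn) / (lamk - lamn)) := by
    rw [← div_le_iff₀ hL]; linarith
  have hlog := mul_le_mul_of_nonneg_left (log_div_le_log_chebyshevBase_sub h3 h2.le h1.le) hs2
  show lam1 - lamn - (s - 2) * log (chebyshevBase ((lam1 - lamk1) / (lamk1 - lamn))) ≤
    lamk - lamn - (s - 2) * log (chebyshevBase ((lamk - lamk1) / (lamk1 - lamn)))
  linarith
end
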